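/- In the setting of Example of the K_{3,3}-type configuration: let α_i = (i−5, 1) ∈ Q² for i = 1,…,9, and T₀ = {123, 456, 789, 147, 258, 369}. Then the six linear forms α_S on Q⁹ (normals of D_S for S ∈ T₀, each given by the Laplace expansion α_{abc} = Δ_{bc}e_a* − Δ_{ac}e_b* + Δ_{ab}e_c*) span a subspace of dimension exactly 5; hence rank ⋂_{S∈T₀} D_S = 5 < 6 = ν(T₀). -/

import Mathlib

/-! Since `Δ_{ij} = i − j`, on the `3 × 3` grid of indices the three row forms are the second
differences `(−1, 2, −1)` along the rows and the three column forms are `3·(−1, 2, −1)` along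
the columns. Taking the second difference once more, across the row forms and across the column
forms, gives the same function of the grid, which is the only relation: the remaining five forms
have a triangular `5 × 5` minor. Finally `⋂ D_S` is the kernel of the `6 × 9` matrix of the forms,
so rank–nullity gives `9 − 5`. -/

/-- The normals `α_i = (i−5, 1) ∈ ℚ²`, `i = 1,…,9` (zero-based: `α i = (i−4, 1)`). -/
def kAlpha (i : Fin 9) : Fin 2 → ℚ := ![(i : ℚ) - 4, 1]

/-- `Δ_{ij} = det(α_i, α_j)`. -/
def kDelta (i j : Fin 9) : ℚ :=
  kAlpha i 0 * kAlpha j 1 - kAlpha i 1 * kAlpha j 0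

/-- The Laplace-expansion normal `α_{abc} = Δ_{bc}e_a* − Δ_{ac}e_b* + Δ_{ab}e_c*`
of `D_{abc}`, as a vector in `ℚ⁹`. -/
def kForm (a b c : Fin 9) : Fin 9 → ℚ :=
  kDelta b c • (Pi.single a 1 : Fin 9 → ℚ)
    - kDelta a c • (Pi.single b 1 : Fin 9 → ℚ)
    + kDelta a b • (Pi.single c 1 : Fin 9 → ℚ)

/-- The six normals for `T₀ = {123, 456, 789, 147, 258, 369}` (0-based indices). -/
def kForms : Fin 6 → (Fin 9 → ℚ) :=
  ![kForm 0 1 2, kForm 3 4 5, kForm 6 7 8, kForm 0 3 6, kForm 1 4 7, kForm 2 5 8]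

/-- A vector `w ∈ ℚ⁹` as a linear functional `t ↦ Σ_i w i * t i` on `ℚ⁹`. -/
noncomputable def kFunctional (w : Fin 9 → ℚ) : (Fin 9 → ℚ) →ₗ[ℚ] ℚ :=
  ∑ i, w i • LinearMap.proj i

open Module Submodule

lemma kDelta_eq_sub (i j : Fin 9) : kDelta i j = (i : ℚ) - j := by
  simp [kDelta, kAlpha]

lemma kForm_apply (a b c j : Fin 9) : kForm a b c j =
    (if j = a then (b - c : ℚ) else 0) - (if j = b then (a - c : ℚ) else 0)
      + (if j = c then (a - b : ℚ) else 0) := by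
  simp [kForm, Pi.single_apply, kDelta_eq_sub]

lemma kForms_eq : kForms = ![
    ![-1, 2, -1, 0, 0, 0, 0, 0, 0],
    ![0, 0, 0, -1, 2, -1, 0, 0, 0],
    ![0, 0, 0, 0, 0, 0, -1, 2, -1],
    ![-3, 0, 0, 6, 0, 0, -3, 0, 0],
    ![0, -3, 0, 0, 6, 0, 0, -3, 0],
    ![0, 0, -3, 0, 0, 6, 0, 0, -3]] := by
  ext i j
  fin_cases i <;> fin_cases j <;> simp [kForms, kForm_apply] <;> norm_num

lemma finrank_span_range_eq_of_not_linearIndependent {K V : Type*} [DivisionRing K]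
    [AddCommGroup V] [Module K V] {n : ℕ} {v : Fin (n + 1) → V}
    (hdep : ¬LinearIndependent K v) (hind : LinearIndependent K (v ∘ Fin.castSucc)) :
    finrank K (span K (Set.range v)) = n := by
  have : FiniteDimensional K (span K (Set.range v)) :=
    FiniteDimensional.span_of_finite K (Set.finite_range v)
  have hle : finrank K (span K (Set.range v)) ≤ n + 1 :=
    (finrank_range_le_card (R := K) v).trans_eq (Fintype.card_fin _)
  have hne : finrank K (span K (Set.range v)) ≠ n + 1 := fun h =>
    hdep (linearIndependent_iff_card_eq_finrank_span.mpr (by simp [Set.finrank, h]))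
  have hge : n ≤ finrank K (span K (Set.range v)) :=
    calc n = finrank K (span K (Set.range (v ∘ Fin.castSucc))) := by
          simpa using (finrank_span_eq_card hind).symm
      _ ≤ _ := Submodule.finrank_mono (span_mono (Set.range_comp_subset_range _ _))
  omega

lemma Matrix.linearIndependent_rows_of_det_submatrix_ne_zero {K m n : Type*} [Field K]
    [Fintype m] [DecidableEq m] (A : Matrix m n K) (c : m → n)
    (h : (A.submatrix id c).det ≠ 0) : LinearIndependent K A :=
  (Matrix.linearIndependent_rows_of_det_ne_zero h).of_comp (LinearMap.funLeft K K c)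

lemma Matrix.finrank_ker_mulVecLin_add_finrank_span_rows {K m n : Type*} [Field K]
    [Fintype m] [Fintype n] (A : Matrix m n K) :
    finrank K (LinearMap.ker A.mulVecLin) + finrank K (span K (Set.range A)) = Fintype.card n := by
  calc _ = finrank K (LinearMap.ker A.mulVecLin) + A.rank := by
        rw [A.rank_eq_finrank_span_row]; rfl
    _ = Fintype.card n := by
        rw [Matrix.rank, add_comm, LinearMap.finrank_range_add_finrank_ker,
          finrank_fintype_fun_eq_card]

lemma kFunctional_apply (w t : Fin 9 → ℚ) : kFunctional w t = w ⬝ᵥ t := by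
  simp [kFunctional, dotProduct]

lemma iInf_ker_kFunctional {ι : Type*} [Fintype ι] (w : ι → Fin 9 → ℚ) :
    ⨅ i, LinearMap.ker (kFunctional (w i)) =
      LinearMap.ker (Matrix.mulVecLin (w : Matrix ι (Fin 9) ℚ)) := by
  ext t
  simp only [Submodule.mem_iInf, LinearMap.mem_ker, kFunctional_apply, funext_iff, Pi.zero_apply]
  rfl

lemma not_linearIndependent_kForms : ¬LinearIndependent ℚ kForms := by
  rw [Fintype.not_linearIndependent_iff]
  -- `3 (r₀ − 2 r₁ + r₂) = c₀ − 2 c₁ + c₂` for the row forms `rᵢ` and the column forms `cⱼ`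
  refine ⟨![3, -6, 3, -1, 2, -1], ?_, 0, by norm_num⟩
  rw [kForms_eq]
  ext j
  fin_cases j <;> simp [Fin.sum_univ_succ] <;> norm_num

lemma linearIndependent_kForms_castSucc : LinearIndependent ℚ (kForms ∘ Fin.castSucc) := by
  -- column `3i + 2` meets only `rᵢ`, and columns `0, 1` then separate `c₀, c₁`
  refine Matrix.linearIndependent_rows_of_det_submatrix_ne_zero _ ![2, 5, 8, 0, 1] ?_
  rw [Matrix.det_of_isUpperTriangular]
  · simp [kForms_eq, Fin.prod_univ_succ, Matrix.submatrix]
  · intro i j hij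
    fin_cases i <;> fin_cases j <;> simp_all [kForms_eq, Matrix.submatrix]

lemma finrank_span_kForms : finrank ℚ (span ℚ (Set.range kForms)) = 5 :=
  finrank_span_range_eq_of_not_linearIndependent not_linearIndependent_kForms
    linearIndependent_kForms_castSucc

/-- K₃,₃-type configuration: with `α_i = (i−5,1)` for `i = 1,…,9` and
`T₀ = {123, 456, 789, 147, 258, 369}`, the six normals `α_S` of the hyperplanes `D_S`
(`S ∈ T₀`) span a subspace of `(ℚ⁹)*` of dimension exactly 5, and hence
`rank ⋂_{S∈T₀} D_S = 5 < 6 = ν(T₀)`. -/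
theorem k33_configuration_rank :
    Module.finrank ℚ ↥(Submodule.span ℚ (Set.range kForms)) = 5 ∧
    9 - Module.finrank ℚ ↥(⨅ m : Fin 6, LinearMap.ker (kFunctional (kForms m))) = 5 ∧
    (5 : ℕ) < 6 := by
  refine ⟨finrank_span_kForms, ?_, by norm_num⟩
  have hnullity :=
    Matrix.finrank_ker_mulVecLin_add_finrank_span_rows (kForms : Matrix (Fin 6) (Fin 9) ℚ)
  rw [finrank_span_kForms, Fintype.card_fin] at hnullity
  rw [iInf_ker_kFunctional]
  omega
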